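/- arXiv:1812.05579 — 2 statements merged into one kernel-verified Lean document; each statement's English description precedes it below -/
import Mathlib

section
/- Let ψ : GL⁺ → ℝ be continuously differentiable and non-degenerate, i.e. for every sequence (Fₙ) in GL⁺, if det Fₙ → 0 or ‖Fₙ‖ + ‖Fₙ⁻¹‖ → +∞ then ψ(Fₙ) → +∞. Define the Piola–Kirchhoff stress P(F) as the gradient of ψ at F with respect to the Frobenius inner product, and the Cauchy stress T(F) = (det F)⁻¹ P(F) Fᵀ. Then there exists G ∈ GL⁺ with T(G) = 0 (equivalently P(G) = 0); moreover G can be taken to be a global minimizer of ψ on GL⁺. -/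
/-!
Non-degeneracy keeps the sublevel set `{ψ ≤ ψ 1}` away from `det = 0` and bounded in the
Frobenius norm, so it lies in a compact subset `K` of GL⁺. A minimizer of `ψ` on `K` is then a
global minimizer on GL⁺, hence an interior critical point since GL⁺ is open, and the first variation
in the direction `H = P G` gives `tr ((P G)ᵀ P G) = 0`.
-/

open Matrix Filter Topology

/-- The Frobenius norm of a 3×3 real matrix. -/
noncomputable def frob (A : Matrix (Fin 3) (Fin 3) ℝ) : ℝ :=
  Real.sqrt (Matrix.trace (Aᵀ * A))

/-- GL⁺: the set of 3×3 real matrices with positive determinant. -/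
def GLpos : Set (Matrix (Fin 3) (Fin 3) ℝ) := {F | 0 < F.det}

/-- The Cauchy stress associated to a Piola–Kirchhoff stress `P`:
`T(F) = (det F)⁻¹ P(F) Fᵀ`. -/
noncomputable def cauchy (P : Matrix (Fin 3) (Fin 3) ℝ → Matrix (Fin 3) (Fin 3) ℝ)
    (F : Matrix (Fin 3) (Fin 3) ℝ) : Matrix (Fin 3) (Fin 3) ℝ :=
  (F.det)⁻¹ • (P F * Fᵀ)

theorem bddAbove_image_sublevel_of_tendsto_atTop {α : Type*} {S : Set α} {u ψ : α → ℝ}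
    (h : ∀ xs : ℕ → α, (∀ n, xs n ∈ S) → Tendsto (u ∘ xs) atTop atTop →
      Tendsto (ψ ∘ xs) atTop atTop) (c : ℝ) :
    BddAbove (u '' {x | x ∈ S ∧ ψ x ≤ c}) := by
  by_contra hunb
  simp only [not_bddAbove_iff, Set.exists_mem_image] at hunb
  choose xs hxs hu using fun n : ℕ => hunb n
  have hψ := h xs (fun n => (hxs n).1)
    (tendsto_atTop_mono (fun n => (hu n).le) tendsto_natCast_atTop_atTop)
  obtain ⟨n, hn⟩ := (hψ.eventually_gt_atTop c).exists
  exact (hxs n).2.not_gt hn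

theorem exists_isMinOn_of_sublevel_subset {X α : Type*} [TopologicalSpace X] [LinearOrder α]
    [TopologicalSpace α] [ClosedIicTopology α] {s K : Set X} {f : X → α} (hK : IsCompact K)
    (hf : ContinuousOn f K) {x₀ : X} (hx₀ : x₀ ∈ K) (hsub : ∀ x ∈ s, f x ≤ f x₀ → x ∈ K) :
    ∃ x ∈ K, IsMinOn f s x := by
  obtain ⟨x, hxK, hmin⟩ := hK.exists_isMinOn ⟨x₀, hx₀⟩ hf
  refine ⟨x, hxK, fun y hy => ?_⟩
  rcases le_total (f y) (f x₀) with hle | hge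
  · exact hmin (hsub y hy hle)
  · exact (hmin hx₀).trans hge

theorem eq_zero_of_isLocalMin_of_hasDerivAt_trace {m n : Type*} [Fintype m] [Fintype n]
    {ψ : Matrix m n ℝ → ℝ} {G D : Matrix m n ℝ} (hmin : IsLocalMin ψ G)
    (hD : ∀ H, HasDerivAt (fun t : ℝ => ψ (G + t • H)) (trace (Dᵀ * H)) 0) : D = 0 := by
  have hline : IsLocalMin (fun t : ℝ => ψ (G + t • D)) 0 :=
    IsLocalMin.comp_continuous (g := fun t : ℝ => G + t • D) (by simpa using hmin) (by fun_prop)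
  rw [← trace_conjTranspose_mul_self_eq_zero_iff, conjTranspose_eq_transpose_of_trivial]
  exact hline.hasDerivAt_eq_zero (hD D)

lemma one_mem_GLpos : (1 : Matrix (Fin 3) (Fin 3) ℝ) ∈ GLpos := by simp [GLpos]

lemma isOpen_GLpos : IsOpen GLpos := isOpen_lt continuous_const continuous_id.matrix_det

theorem exists_pos_le_det_on_sublevel {ψ : Matrix (Fin 3) (Fin 3) ℝ → ℝ}
    (hdet : ∀ Fs : ℕ → Matrix (Fin 3) (Fin 3) ℝ, (∀ n, Fs n ∈ GLpos) →
      Tendsto (fun n => (Fs n).det) atTop (𝓝 0) → Tendsto (fun n => ψ (Fs n)) atTop atTop)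
    (c : ℝ) :
    ∃ δ > 0, ∀ F ∈ GLpos, ψ F ≤ c → δ ≤ F.det := by
  obtain ⟨M, hM⟩ := bddAbove_image_sublevel_of_tendsto_atTop (S := GLpos)
    (u := fun F => (F.det)⁻¹) (c := c) fun Fs hFs h =>
      hdet Fs hFs (by simpa [Function.comp_def, Pi.inv_def] using h.inv_tendsto_atTop)
  refine ⟨(max M 1)⁻¹, by positivity, fun F hF hle => ?_⟩
  exact (inv_le_comm₀ hF (by positivity)).mp
    ((hM ⟨F, ⟨hF, hle⟩, rfl⟩).trans (le_max_left M 1))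

theorem exists_frob_le_on_sublevel {ψ : Matrix (Fin 3) (Fin 3) ℝ → ℝ}
    (hfrob : ∀ Fs : ℕ → Matrix (Fin 3) (Fin 3) ℝ, (∀ n, Fs n ∈ GLpos) →
      Tendsto (fun n => frob (Fs n) + frob (Fs n)⁻¹) atTop atTop →
      Tendsto (fun n => ψ (Fs n)) atTop atTop) (c : ℝ) :
    ∃ R, ∀ F ∈ GLpos, ψ F ≤ c → frob F ≤ R := by
  obtain ⟨R, hR⟩ :=
    bddAbove_image_sublevel_of_tendsto_atTop (u := fun F => frob F + frob F⁻¹) hfrob c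
  refine ⟨R, fun F hF hle => ?_⟩
  have hsum := hR ⟨F, ⟨hF, hle⟩, rfl⟩
  have hinv : 0 ≤ frob F⁻¹ := Real.sqrt_nonneg _
  linarith

section FrobeniusNorm

attribute [local instance] Matrix.frobeniusNormedAddCommGroup Matrix.frobeniusNormedSpace

lemma frob_eq_norm (A : Matrix (Fin 3) (Fin 3) ℝ) : frob A = ‖A‖ := by
  rw [frob, frobenius_norm_def, ← Real.sqrt_eq_rpow, trace, Finset.sum_comm]
  simp [mul_apply, sq]

lemma isCompact_le_det_frob_le (δ R : ℝ) :
    IsCompact {F : Matrix (Fin 3) (Fin 3) ℝ | δ ≤ F.det ∧ frob F ≤ R} := by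
  simp only [frob_eq_norm, ← mem_closedBall_zero_iff]
  exact (isCompact_closedBall 0 R).inter_left
    (isClosed_le continuous_const continuous_id.matrix_det)

end FrobeniusNorm

theorem existence_of_relaxed_state_general
    (ψ : Matrix (Fin 3) (Fin 3) ℝ → ℝ)
    (P : Matrix (Fin 3) (Fin 3) ℝ → Matrix (Fin 3) (Fin 3) ℝ)
    (hψcont : ContinuousOn ψ GLpos)
    (hgrad : ∀ F ∈ GLpos, ∀ H : Matrix (Fin 3) (Fin 3) ℝ,
      HasDerivAt (fun t : ℝ => ψ (F + t • H)) (Matrix.trace ((P F)ᵀ * H)) 0)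
    (hnondeg : ∀ Fs : ℕ → Matrix (Fin 3) (Fin 3) ℝ,
      (∀ n, Fs n ∈ GLpos) →
      (Tendsto (fun n => (Fs n).det) atTop (𝓝 0) ∨
        Tendsto (fun n => frob (Fs n) + frob (Fs n)⁻¹) atTop atTop) →
      Tendsto (fun n => ψ (Fs n)) atTop atTop) :
    ∃ G ∈ GLpos, cauchy P G = 0 ∧ ∀ F ∈ GLpos, ψ G ≤ ψ F := by
  obtain ⟨δ, hδ, hdet⟩ :=
    exists_pos_le_det_on_sublevel (fun Fs hFs h => hnondeg Fs hFs (Or.inl h)) (ψ 1)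
  obtain ⟨R, hR⟩ := exists_frob_le_on_sublevel (fun Fs hFs h => hnondeg Fs hFs (Or.inr h)) (ψ 1)
  have hK : {F | δ ≤ F.det ∧ frob F ≤ R} ⊆ GLpos := fun F hF => hδ.trans_le hF.1
  obtain ⟨G, hGK, hGmin⟩ := exists_isMinOn_of_sublevel_subset (isCompact_le_det_frob_le δ R)
    (hψcont.mono hK) (x₀ := 1) ⟨hdet 1 one_mem_GLpos le_rfl, hR 1 one_mem_GLpos le_rfl⟩
    fun F hF hle => ⟨hdet F hF hle, hR F hF hle⟩
  have hG : G ∈ GLpos := hK hGK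
  have hPG : P G = 0 := eq_zero_of_isLocalMin_of_hasDerivAt_trace
    (hGmin.isLocalMin (isOpen_GLpos.mem_nhds hG)) (hgrad G hG)
  exact ⟨G, hG, by simp [cauchy, hPG], hGmin⟩

/-- Existence of a relaxed state (compressible case): a C¹, non-degenerate energy on GL⁺
has a global minimizer `G`, at which the Cauchy stress vanishes. -/
theorem existence_of_relaxed_state
    (ψ : Matrix (Fin 3) (Fin 3) ℝ → ℝ)
    (P : Matrix (Fin 3) (Fin 3) ℝ → Matrix (Fin 3) (Fin 3) ℝ)
    (hψcont : ContinuousOn ψ GLpos)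
    (hPcont : ContinuousOn P GLpos)
    (hgrad : ∀ F ∈ GLpos, ∀ H : Matrix (Fin 3) (Fin 3) ℝ,
      HasDerivAt (fun t : ℝ => ψ (F + t • H)) (Matrix.trace ((P F)ᵀ * H)) 0)
    (hnondeg : ∀ Fs : ℕ → Matrix (Fin 3) (Fin 3) ℝ,
      (∀ n, Fs n ∈ GLpos) →
      (Tendsto (fun n => (Fs n).det) atTop (𝓝 0) ∨
        Tendsto (fun n => frob (Fs n) + frob (Fs n)⁻¹) atTop atTop) →
      Tendsto (fun n => ψ (Fs n)) atTop atTop) :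
    ∃ G ∈ GLpos, cauchy P G = 0 ∧ ∀ F ∈ GLpos, ψ G ≤ ψ F :=
  existence_of_relaxed_state_general ψ P hψcont hgrad hnondeg
end

section
/- Let h : M₃(ℝ) × M₃(ℝ) × (0,∞) → ℝ be convex and let G be a 3×3 real matrix with det G > 0. Define ψ_G on GL⁺ by ψ_G(F) = (det G)·h(F G⁻¹, cof(F G⁻¹), det(F G⁻¹)), where cof A = (det A)(A⁻¹)ᵀ. Then ψ_G is polyconvex: there exists a convex function h_G : M₃(ℝ) × M₃(ℝ) × (0,∞) → ℝ such that ψ_G(F) = h_G(F, cof F, det F) for all F ∈ GL⁺. (Explicitly, one may take h_G(F, C, δ) = (det G)·h(F G⁻¹, C·(cof G)⁻¹, δ/det G), using that cof(AB) = (cof A)(cof B).) -/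
open Matrix

/-- The cofactor matrix of a 3×3 real matrix: `cof A = (det A) (A⁻¹)ᵀ`. -/
noncomputable def cof (A : Matrix (Fin 3) (Fin 3) ℝ) : Matrix (Fin 3) (Fin 3) ℝ :=
  A.det • (A⁻¹)ᵀ

/-!
Right multiplication by `G⁻¹` acts on the polyconvex variables `(F, cof F, det F)` through the
linear map `(X, C, δ) ↦ (X G⁻¹, C cof G⁻¹, δ / det G)`, because `cof` and `det` are
multiplicative. A convex function composed with a linear map is convex, and since `det G > 0`
this map preserves the half-space `δ > 0`, so `h_G = det G • (h ∘ this map)` does the job.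
-/

-- Holds for all `A`, `B`: with the junk inverse `A⁻¹ = 0` for singular `A`, both sides vanish
-- unless `A` and `B` are invertible.
theorem cof_mul (A B : Matrix (Fin 3) (Fin 3) ℝ) : cof (A * B) = cof A * cof B := by
  rw [cof, cof, cof, det_mul, Matrix.mul_inv_rev, transpose_mul, smul_mul_smul_comm, mul_comm]

namespace Distortion

abbrev PolyconvexVars := Matrix (Fin 3) (Fin 3) ℝ × Matrix (Fin 3) (Fin 3) ℝ × ℝ

noncomputable def map (G : Matrix (Fin 3) (Fin 3) ℝ) : PolyconvexVars →ₗ[ℝ] PolyconvexVars :=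
  (LinearMap.mulRight ℝ G⁻¹).prodMap
    ((LinearMap.mulRight ℝ (cof G⁻¹)).prodMap (G.det⁻¹ • LinearMap.id))

theorem map_apply (G : Matrix (Fin 3) (Fin 3) ℝ) (p : PolyconvexVars) :
    map G p = (p.1 * G⁻¹, p.2.1 * cof G⁻¹, G.det⁻¹ * p.2.2) :=
  rfl

theorem map_polyconvexVars (G F : Matrix (Fin 3) (Fin 3) ℝ) :
    map G (F, cof F, F.det) = (F * G⁻¹, cof (F * G⁻¹), (F * G⁻¹).det) := by
  rw [map_apply, cof_mul, det_mul, det_nonsing_inv, Ring.inverse_eq_inv', mul_comm F.det]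

theorem preimage_map_det_pos {G : Matrix (Fin 3) (Fin 3) ℝ} (hG : 0 < G.det) :
    map G ⁻¹' {p : PolyconvexVars | 0 < p.2.2} = {p | 0 < p.2.2} := by
  ext p
  simp only [Set.mem_preimage, Set.mem_ofPred_eq, map_apply]
  exact mul_pos_iff_of_pos_left (inv_pos.mpr hG)

end Distortion

open Distortion in
/-- Polyconvexity is inherited under a fixed elastic distortion `G`: if `h` is convex,
then the distorted energy `ψ_G(F) = (det G) h(F G⁻¹, cof(F G⁻¹), det(F G⁻¹))` is
polyconvex. -/
theorem polyconvexity_inherited_by_distortion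
    (h : Matrix (Fin 3) (Fin 3) ℝ × Matrix (Fin 3) (Fin 3) ℝ × ℝ → ℝ)
    (hconv : ConvexOn ℝ {p : Matrix (Fin 3) (Fin 3) ℝ × Matrix (Fin 3) (Fin 3) ℝ × ℝ |
      0 < p.2.2} h)
    (G : Matrix (Fin 3) (Fin 3) ℝ) (hG : 0 < G.det) :
    ∃ hG' : Matrix (Fin 3) (Fin 3) ℝ × Matrix (Fin 3) (Fin 3) ℝ × ℝ → ℝ,
      ConvexOn ℝ {p : Matrix (Fin 3) (Fin 3) ℝ × Matrix (Fin 3) (Fin 3) ℝ × ℝ |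
        0 < p.2.2} hG' ∧
      ∀ F ∈ GLpos,
        G.det * h (F * G⁻¹, cof (F * G⁻¹), (F * G⁻¹).det) = hG' (F, cof F, F.det) := by
  have hconv' := (hconv.comp_linearMap (map G)).smul hG.le
  rw [preimage_map_det_pos hG] at hconv'
  exact ⟨fun p => G.det * h (map G p), hconv', fun F _ => by rw [← map_polyconvexVars]⟩
end
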